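/- Under Assumption (f L-smooth, g proper lsc, argmin(f+g) ≠ ∅), with γ and λ in the admissible range, the DRS sequence satisfies: for each k, dist(0, ∂̂(f+g)(vᵏ)) ≤ ((1 − γσ_f)/γ)‖uᵏ − vᵏ‖, where ∂̂ is the regular subdifferential. -/

import Mathlib

/-
Put `ξ = ∇f(vᵏ) + (2uᵏ - sᵏ - vᵏ)/γ`. Optimality of `vᵏ` for the prox of `g` and the
`σ`-hypoconvexity of `f` give a quadratic minorant of `f + g` at `vᵏ` with slope `ξ`, so `ξ` is a
regular subgradient. Optimality of `uᵏ` gives `∇f(uᵏ) = (sᵏ - uᵏ)/γ`, hence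
`ξ = (uᵏ - vᵏ)/γ - (∇f(uᵏ) - ∇f(vᵏ))`. The function `f - σ/2‖·‖²` is convex with an
`(L - σ)`-quadratic upper bound, so its gradient is cocoercive (Baillon–Haddad), and this bounds
`‖ξ‖` by `(1/γ - σ)‖uᵏ - vᵏ‖`.
-/

open Set Filter Topology

/-- The regular (Fréchet) subdifferential of an extended-real-valued function. -/
noncomputable def hatSubdiff {n : ℕ} (φ : EuclideanSpace ℝ (Fin n) → EReal)
    (xb : EuclideanSpace ℝ (Fin n)) : Set (EuclideanSpace ℝ (Fin n)) :=
  {v | (0 : EReal) ≤ Filter.liminf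
    (fun x => (φ x - φ xb - (((inner ℝ v (x - xb) : ℝ)) : EReal)) * ((‖x - xb‖⁻¹ : ℝ) : EReal))
    (nhdsWithin xb {xb}ᶜ)}

open RealInnerProductSpace

theorem ne_top_of_isMinOn_add_coe {α : Type*} {g : α → EReal} {q : α → ℝ} {v : α}
    (hg : ∃ x, g x ≠ ⊤) (hmin : IsMinOn (fun w => g w + (q w : EReal)) univ v) : g v ≠ ⊤ := by
  obtain ⟨x, hx⟩ := hg
  intro hv
  have h := isMinOn_univ_iff.1 hmin x
  simp only [hv, EReal.top_add_coe, top_le_iff] at h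
  exact EReal.add_ne_top hx (EReal.coe_ne_top _) h

section

variable {E : Type*} [NormedAddCommGroup E] [InnerProductSpace ℝ E]

theorem norm_smul_sub_le_of_norm_sq_le_mul_inner {a : ℝ} {e D : E} (ha : 0 ≤ a)
    (h : ‖D‖ ^ 2 ≤ 2 * a * ⟪D, e⟫) : ‖a • e - D‖ ≤ a * ‖e‖ := by
  have hsq : ‖a • e - D‖ ^ 2 ≤ (a * ‖e‖) ^ 2 := by
    rw [norm_sub_sq_real, norm_smul, Real.norm_of_nonneg ha, real_inner_smul_left,
      real_inner_comm]
    nlinarith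
  exact le_of_pow_le_pow_left₀ two_ne_zero (by positivity) hsq

theorem coe_add_inner_sub_le_of_isMinOn_add_sq {g : E → EReal} {γ b : ℝ} {z v : E}
    (hmin : IsMinOn (fun w => g w + ((1 / (2 * γ) * ‖w - z‖ ^ 2 : ℝ) : EReal)) univ v)
    (hv : g v = b) (x : E) :
    ((b + ⟪γ⁻¹ • (z - v), x - v⟫ - 1 / (2 * γ) * ‖x - v‖ ^ 2 : ℝ) : EReal) ≤ g x := by
  have h := isMinOn_univ_iff.1 hmin x
  simp only [hv] at h
  have hexp : b + ⟪γ⁻¹ • (z - v), x - v⟫ - 1 / (2 * γ) * ‖x - v‖ ^ 2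
      = b + 1 / (2 * γ) * ‖v - z‖ ^ 2 - 1 / (2 * γ) * ‖x - z‖ ^ 2 := by
    rw [show x - z = (x - v) + (v - z) by abel, norm_add_sq_real, real_inner_smul_left,
      real_inner_comm, ← neg_sub v z, inner_neg_right]
    ring
  rw [hexp, EReal.coe_sub, EReal.sub_le_iff_le_add (.inl (EReal.coe_ne_bot _))
    (.inl (EReal.coe_ne_top _)), EReal.coe_add]
  exact h

variable [CompleteSpace E] {f : E → ℝ} {f' : E → E}

theorem HasGradientAt.hasDerivAt_comp_add_smul {g x d : E} {t : ℝ}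
    (h : HasGradientAt f g (x + t • d)) :
    HasDerivAt (fun t : ℝ => f (x + t • d)) ⟪g, d⟫ t := by
  have hline : HasDerivAt (fun t : ℝ => x + t • d) d t := by
    simpa using ((hasDerivAt_id t).smul_const d).const_add x
  have := h.hasFDerivAt.comp_hasDerivAt t hline
  simp only [InnerProductSpace.toDual_apply_apply] at this
  exact this

theorem ConvexOn.add_inner_le_of_hasGradientAt {g x : E} (hconv : ConvexOn ℝ univ f)
    (hf : HasGradientAt f g x) (y : E) : f x + ⟪g, y - x⟫ ≤ f y := by
  have hq : ConvexOn ℝ univ (fun t : ℝ => f (x + t • (y - x))) := by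
    have hline : (fun t : ℝ => f (x + t • (y - x))) = f ∘ AffineMap.lineMap x y := by
      funext t
      simp [AffineMap.lineMap_apply, add_comm]
    simpa [hline] using hconv.comp_affineMap (AffineMap.lineMap x y)
  have hd : HasDerivAt (fun t : ℝ => f (x + t • (y - x))) ⟪g, y - x⟫ 0 :=
    HasGradientAt.hasDerivAt_comp_add_smul (by simpa using hf)
  have := hq.le_slope_of_hasDerivAt (mem_univ 0) (mem_univ 1) one_pos hd
  simp only [slope_def_field, one_smul, add_sub_cancel, zero_smul, add_zero, sub_zero,
    div_one] at this
  linarith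

theorem le_add_inner_add_of_lipschitz_gradient {L : ℝ} (hf : ∀ x, HasGradientAt f (f' x) x)
    (hlip : ∀ x y, ‖f' x - f' y‖ ≤ L * ‖x - y‖) (x y : E) :
    f y ≤ f x + ⟪f' x, y - x⟫ + L / 2 * ‖y - x‖ ^ 2 := by
  set d := y - x
  let r : ℝ → ℝ := fun t => f (x + t • d) - t * ⟪f' x, d⟫ - L / 2 * ‖d‖ ^ 2 * t ^ 2
  have hr : ∀ t, HasDerivAt r (⟪f' (x + t • d), d⟫ - ⟪f' x, d⟫ - L * ‖d‖ ^ 2 * t) t := by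
    intro t
    have hsq : HasDerivAt (fun t : ℝ => L / 2 * ‖d‖ ^ 2 * t ^ 2) (L * ‖d‖ ^ 2 * t) t :=
      ((hasDerivAt_pow 2 t).const_mul (L / 2 * ‖d‖ ^ 2)).congr_deriv (by ring)
    exact (((hf _).hasDerivAt_comp_add_smul).sub (hasDerivAt_mul_const _)).sub hsq
  have hanti : AntitoneOn r (Icc 0 1) := by
    refine antitoneOn_of_hasDerivWithinAt_nonpos (convex_Icc 0 1)
      (fun t _ => (hr t).continuousAt.continuousWithinAt) (fun t _ => (hr t).hasDerivWithinAt) ?_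
    intro t ht
    rw [interior_Icc] at ht
    calc ⟪f' (x + t • d), d⟫ - ⟪f' x, d⟫ - L * ‖d‖ ^ 2 * t
        = ⟪f' (x + t • d) - f' x, d⟫ - L * ‖d‖ ^ 2 * t := by rw [inner_sub_left]
      _ ≤ ‖f' (x + t • d) - f' x‖ * ‖d‖ - L * ‖d‖ ^ 2 * t := by
          gcongr; exact real_inner_le_norm _ _
      _ ≤ L * ‖x + t • d - x‖ * ‖d‖ - L * ‖d‖ ^ 2 * t := by gcongr; exact hlip _ _
      _ = 0 := by
          simp only [add_sub_cancel_left, norm_smul, Real.norm_eq_abs, abs_of_pos ht.1]; ring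
  have h01 := hanti (left_mem_Icc.2 zero_le_one) (right_mem_Icc.2 zero_le_one) zero_le_one
  simp only [r, d, one_smul, add_sub_cancel, one_mul, one_pow, mul_one, zero_smul, add_zero,
    zero_mul, sub_zero, zero_pow two_ne_zero, mul_zero] at h01
  linarith

theorem ConvexOn.norm_sub_sq_le_mul_inner_of_descent {M : ℝ} (hM : 0 < M)
    (hconv : ConvexOn ℝ univ f) (hf : ∀ x, HasGradientAt f (f' x) x)
    (hdesc : ∀ x y, f y ≤ f x + ⟪f' x, y - x⟫ + M / 2 * ‖y - x‖ ^ 2) (x y : E) :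
    ‖f' x - f' y‖ ^ 2 ≤ M * ⟪f' x - f' y, x - y⟫ := by
  -- both bounds are evaluated at the gradient step `y - M⁻¹ • (f' y - f' x)`
  have key : ∀ x y, f x + ⟪f' x, y - x⟫ + ‖f' y - f' x‖ ^ 2 / (2 * M) ≤ f y := by
    intro x y
    set D := f' y - f' x
    have hlow := hconv.add_inner_le_of_hasGradientAt (hf x) (y - M⁻¹ • D)
    have hup := hdesc y (y - M⁻¹ • D)
    have hD : ⟪f' y, D⟫ - ⟪f' x, D⟫ = ‖D‖ ^ 2 := by
      rw [← inner_sub_left, real_inner_self_eq_norm_sq]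
    rw [show y - M⁻¹ • D - x = (y - x) - M⁻¹ • D by abel, inner_sub_right,
      real_inner_smul_right] at hlow
    rw [show y - M⁻¹ • D - y = -(M⁻¹ • D) by abel, inner_neg_right, real_inner_smul_right,
      norm_neg, norm_smul, Real.norm_of_nonneg (inv_nonneg.2 hM.le)] at hup
    field_simp at hlow hup ⊢
    nlinarith
  have hxy := key x y
  have hyx := key y x
  rw [norm_sub_rev] at hxy
  have hsum : ⟪f' x, y - x⟫ + ⟪f' y, x - y⟫ = -⟪f' x - f' y, x - y⟫ := by
    rw [inner_sub_left, ← neg_sub x y, inner_neg_right]; ring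
  have : ‖f' x - f' y‖ ^ 2 / M ≤ ⟪f' x - f' y, x - y⟫ := by
    have hhalf : ‖f' x - f' y‖ ^ 2 / (2 * M) + ‖f' x - f' y‖ ^ 2 / (2 * M)
        = ‖f' x - f' y‖ ^ 2 / M := by field_simp; ring
    linarith
  rwa [div_le_iff₀ hM, mul_comm] at this

section Hypoconvex

variable {σ : ℝ}

theorem HasGradientAt.sub_half_mul_norm_sq {g x : E} (hf : HasGradientAt f g x) :
    HasGradientAt (fun x => f x - σ / 2 * ‖x‖ ^ 2) (g - σ • x) x := by
  rw [hasGradientAt_iff_hasFDerivAt] at hf ⊢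
  refine (hf.sub ((hasStrictFDerivAt_norm_sq x).hasFDerivAt.const_mul (σ / 2))).congr_fderiv ?_
  ext y
  simp only [sub_apply, InnerProductSpace.toDual_apply_apply, smul_apply, coe_innerSL_apply,
    nsmul_eq_mul, Nat.cast_ofNat, smul_eq_mul, map_sub, map_smul, sub_right_inj]
  ring

theorem add_inner_add_sq_le_of_convexOn_sub {g x : E}
    (hconv : ConvexOn ℝ univ (fun x => f x - σ / 2 * ‖x‖ ^ 2)) (hf : HasGradientAt f g x)
    (y : E) : f x + ⟪g, y - x⟫ + σ / 2 * ‖y - x‖ ^ 2 ≤ f y := by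
  have h := hconv.add_inner_le_of_hasGradientAt hf.sub_half_mul_norm_sq y
  rw [norm_sub_sq_real]
  simp only [inner_sub_left, inner_sub_right, real_inner_smul_left, real_inner_self_eq_norm_sq,
    real_inner_comm x y] at h ⊢
  linarith

theorem le_add_inner_add_sub_half_mul_norm_sq {L : ℝ} (hf : ∀ x, HasGradientAt f (f' x) x)
    (hlip : ∀ x y, ‖f' x - f' y‖ ≤ L * ‖x - y‖) (x y : E) :
    f y - σ / 2 * ‖y‖ ^ 2 ≤ f x - σ / 2 * ‖x‖ ^ 2 + ⟪f' x - σ • x, y - x⟫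
      + (L - σ) / 2 * ‖y - x‖ ^ 2 := by
  have h := le_add_inner_add_of_lipschitz_gradient hf hlip x y
  rw [norm_sub_sq_real] at h ⊢
  simp only [inner_sub_left, inner_sub_right, real_inner_smul_left, real_inner_self_eq_norm_sq,
    real_inner_comm x y] at h ⊢
  linarith

theorem norm_smul_sub_sub_le_of_convexOn_sub {L c : ℝ}
    (hconv : ConvexOn ℝ univ (fun x => f x - σ / 2 * ‖x‖ ^ 2))
    (hf : ∀ x, HasGradientAt f (f' x) x) (hlip : ∀ x y, ‖f' x - f' y‖ ≤ L * ‖x - y‖)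
    (hLc : L + σ ≤ 2 * c) (hσc : σ < c) (x y : E) :
    ‖c • (x - y) - (f' x - f' y)‖ ≤ (c - σ) * ‖x - y‖ := by
  have hdesc : ∀ x y, f y - σ / 2 * ‖y‖ ^ 2 ≤ f x - σ / 2 * ‖x‖ ^ 2 + ⟪f' x - σ • x, y - x⟫
      + 2 * (c - σ) / 2 * ‖y - x‖ ^ 2 := fun x y => by
    have := le_add_inner_add_sub_half_mul_norm_sq (σ := σ) hf hlip x y
    nlinarith [sq_nonneg ‖y - x‖]
  have hcoco := hconv.norm_sub_sq_le_mul_inner_of_descent (by linarith)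
    (fun x => (hf x).sub_half_mul_norm_sq) hdesc x y
  have hrw : c • (x - y) - (f' x - f' y) = (c - σ) • (x - y) - (f' x - σ • x - (f' y - σ • y)) := by
    module
  rw [hrw]
  exact norm_smul_sub_le_of_norm_sq_le_mul_inner (by linarith) hcoco

end Hypoconvex

theorem HasGradientAt.eq_smul_sub_of_isMinOn_add_sq {γ : ℝ} {g s u : E}
    (hf : HasGradientAt f g u)
    (hmin : IsMinOn (fun w => f w + 1 / (2 * γ) * ‖w - s‖ ^ 2) univ u) :
    g = γ⁻¹ • (s - u) := by
  have h0 := (hmin.isLocalMin univ_mem).hasFDerivAt_eq_zero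
    (hf.hasFDerivAt.add (((hasFDerivAt_id u).sub_const s).norm_sq.const_mul (1 / (2 * γ))))
  refine ext_inner_right ℝ fun y => ?_
  have hy := DFunLike.congr_fun h0 y
  simp only [one_div, mul_inv_rev, id_eq, map_sub, ContinuousLinearMap.comp_id, add_apply,
    InnerProductSpace.toDual_apply_apply, smul_apply, sub_apply, coe_innerSL_apply, nsmul_eq_mul,
    Nat.cast_ofNat, smul_eq_mul, zero_apply, real_inner_smul_left, inner_sub_left] at hy ⊢
  linarith

end

theorem mem_hatSubdiff_of_forall_le {n : ℕ} {φ : EuclideanSpace ℝ (Fin n) → EReal}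
    {xb ξ : EuclideanSpace ℝ (Fin n)} {a c : ℝ} (hxb : φ xb = a)
    (h : ∀ x, ((a + ⟪ξ, x - xb⟫ - c * ‖x - xb‖ ^ 2 : ℝ) : EReal) ≤ φ x) :
    ξ ∈ hatSubdiff φ xb := by
  have hev : ∀ᶠ x in 𝓝[≠] xb, ((-c * ‖x - xb‖ : ℝ) : EReal) ≤
      (φ x - φ xb - ((⟪ξ, x - xb⟫ : ℝ) : EReal)) * ((‖x - xb‖⁻¹ : ℝ) : EReal) := by
    filter_upwards [self_mem_nhdsWithin] with x hx
    have hpos : 0 < ‖x - xb‖ := norm_pos_iff.2 (sub_ne_zero.2 hx)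
    have hnum : ((-c * ‖x - xb‖ ^ 2 : ℝ) : EReal) ≤ φ x - φ xb - ((⟪ξ, x - xb⟫ : ℝ) : EReal) := by
      rw [hxb]
      calc ((-c * ‖x - xb‖ ^ 2 : ℝ) : EReal)
          = ((a + ⟪ξ, x - xb⟫ - c * ‖x - xb‖ ^ 2 : ℝ) : EReal) - a
              - ((⟪ξ, x - xb⟫ : ℝ) : EReal) := by
            norm_cast; ring
        _ ≤ φ x - a - ((⟪ξ, x - xb⟫ : ℝ) : EReal) :=
            EReal.sub_le_sub (EReal.sub_le_sub (h x) le_rfl) le_rfl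
    calc ((-c * ‖x - xb‖ : ℝ) : EReal)
        = ((-c * ‖x - xb‖ ^ 2 : ℝ) : EReal) * ((‖x - xb‖⁻¹ : ℝ) : EReal) := by
          rw [← EReal.coe_mul]; congr 1; field_simp
      _ ≤ _ := mul_le_mul_of_nonneg_right hnum (EReal.coe_nonneg.2 (by positivity))
  rcases (𝓝[≠] xb).eq_or_neBot with hbot | hne
  · simp [hatSubdiff, hbot]
  have hlim : Tendsto (fun x => ((-c * ‖x - xb‖ : ℝ) : EReal)) (𝓝[≠] xb) (𝓝 0) := by
    have hcont : Continuous (fun x => ((-c * ‖x - xb‖ : ℝ) : EReal)) :=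
      continuous_coe_real_ereal.comp (by fun_prop)
    simpa using (hcont.tendsto xb).mono_left nhdsWithin_le_nhds
  exact hlim.liminf_eq.symm.le.trans (liminf_le_liminf hev)

theorem DRS_subdifferential_bound_general {n : ℕ} (f : EuclideanSpace ℝ (Fin n) → ℝ)
    (g : EuclideanSpace ℝ (Fin n) → EReal) (L σ γ : ℝ) (hL : 0 < L)
    (hσ2 : σ ≤ L)
    (hC1 : ContDiff ℝ 1 f)
    (hLip : ∀ x y, ‖gradient f x - gradient f y‖ ≤ L * ‖x - y‖)
    (hhyp : ConvexOn ℝ Set.univ (fun x => f x - σ / 2 * ‖x‖ ^ 2))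
    (hgproper : ∃ x, g x ≠ ⊤) (hgbot : ∀ x, g x ≠ ⊥)
    (hγ0 : 0 < γ) (hγL : γ < 1 / L)
    (s u v : ℕ → EuclideanSpace ℝ (Fin n))
    (hu : ∀ k, IsMinOn (fun w => f w + 1 / (2 * γ) * ‖w - s k‖ ^ 2) Set.univ (u k))
    (hv : ∀ k, IsMinOn
      (fun w => g w + ((1 / (2 * γ) * ‖w - ((2 : ℝ) • u k - s k)‖ ^ 2 : ℝ) : EReal))
      Set.univ (v k)) :
    ∀ k, Metric.infDist 0 (hatSubdiff (fun x => ((f x : ℝ) : EReal) + g x) (v k))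
      ≤ (1 - γ * σ) / γ * ‖u k - v k‖ := by
  intro k
  have hgrad : ∀ x, HasGradientAt f (gradient f x) x :=
    fun x => (hC1.differentiable one_ne_zero x).hasGradientAt
  have hLγ : L < γ⁻¹ := by rwa [lt_inv_comm₀ hL hγ0, ← one_div]
  have hu' : gradient f (u k) = γ⁻¹ • (s k - u k) :=
    (hgrad (u k)).eq_smul_sub_of_isMinOn_add_sq (hu k)
  obtain ⟨b, hb⟩ : ∃ b : ℝ, g (v k) = b :=
    ⟨_, (EReal.coe_toReal (ne_top_of_isMinOn_add_coe hgproper (hv k)) (hgbot _)).symm⟩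
  set ξ := gradient f (v k) + γ⁻¹ • ((2 : ℝ) • u k - s k - v k)
  have hξ : ξ ∈ hatSubdiff (fun x => ((f x : ℝ) : EReal) + g x) (v k) := by
    refine mem_hatSubdiff_of_forall_le (a := f (v k) + b) (c := 1 / (2 * γ) - σ / 2)
      (by simp [hb]) fun x => ?_
    have hf := add_inner_add_sq_le_of_convexOn_sub hhyp (hgrad (v k)) x
    have hg := coe_add_inner_sub_le_of_isMinOn_add_sq (hv k) hb x
    calc ((f (v k) + b + ⟪ξ, x - v k⟫ - (1 / (2 * γ) - σ / 2) * ‖x - v k‖ ^ 2 : ℝ) : EReal)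
        = ((f (v k) + ⟪gradient f (v k), x - v k⟫ + σ / 2 * ‖x - v k‖ ^ 2 : ℝ) : EReal)
          + ((b + ⟪γ⁻¹ • ((2 : ℝ) • u k - s k - v k), x - v k⟫
            - 1 / (2 * γ) * ‖x - v k‖ ^ 2 : ℝ) : EReal) := by
          rw [← EReal.coe_add, inner_add_left]; ring_nf
      _ ≤ f x + g x := add_le_add (EReal.coe_le_coe_iff.2 hf) hg
  have hξnorm : ‖ξ‖ ≤ (γ⁻¹ - σ) * ‖u k - v k‖ := by
    have hξ' : ξ = γ⁻¹ • (u k - v k) - (gradient f (u k) - gradient f (v k)) := by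
      rw [hu']; module
    rw [hξ']
    exact norm_smul_sub_sub_le_of_convexOn_sub hhyp hgrad hLip (by linarith) (by linarith) _ _
  calc Metric.infDist 0 _ ≤ dist 0 ξ := Metric.infDist_le_dist_of_mem hξ
    _ = ‖ξ‖ := dist_zero_left ξ
    _ ≤ _ := by rwa [show (1 - γ * σ) / γ = γ⁻¹ - σ by field_simp]

/-- along DRS iterates (`uᵏ = prox_{γf}(sᵏ)`, `vᵏ ∈ prox_{γg}(2uᵏ − sᵏ)`,
`sᵏ⁺¹ = sᵏ + λ(vᵏ − uᵏ)`) with `γ, λ` in the admissible range, for each `k`: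
`dist(0, ∂̂(f+g)(vᵏ)) ≤ ((1 − γσ_f)/γ)‖uᵏ − vᵏ‖`. -/
theorem DRS_subdifferential_bound {n : ℕ} (f : EuclideanSpace ℝ (Fin n) → ℝ)
    (g : EuclideanSpace ℝ (Fin n) → EReal) (L σ γ lam : ℝ) (hL : 0 < L)
    (hσL : -L ≤ σ) (hσ2 : σ ≤ L)
    (hC1 : ContDiff ℝ 1 f)
    (hLip : ∀ x y, ‖gradient f x - gradient f y‖ ≤ L * ‖x - y‖)
    (hhyp : ConvexOn ℝ Set.univ (fun x => f x - σ / 2 * ‖x‖ ^ 2))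
    (hgproper : ∃ x, g x ≠ ⊤) (hgbot : ∀ x, g x ≠ ⊥) (hglsc : LowerSemicontinuous g)
    (hargmin : {x | IsMinOn (fun x => ((f x : ℝ) : EReal) + g x) Set.univ x}.Nonempty)
    (hγ0 : 0 < γ) (hγL : γ < 1 / L) (hγσ : γ * (2 * max 0 (-σ)) < 2 - lam)
    (hlam0 : 0 < lam) (hlam2 : lam < 2)
    (s u v : ℕ → EuclideanSpace ℝ (Fin n))
    (hu : ∀ k, IsMinOn (fun w => f w + 1 / (2 * γ) * ‖w - s k‖ ^ 2) Set.univ (u k))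
    (hv : ∀ k, IsMinOn
      (fun w => g w + ((1 / (2 * γ) * ‖w - ((2 : ℝ) • u k - s k)‖ ^ 2 : ℝ) : EReal))
      Set.univ (v k))
    (hs : ∀ k, s (k + 1) = s k + lam • (v k - u k)) :
    ∀ k, Metric.infDist 0 (hatSubdiff (fun x => ((f x : ℝ) : EReal) + g x) (v k))
      ≤ (1 - γ * σ) / γ * ‖u k - v k‖ :=
  DRS_subdifferential_bound_general f g L σ γ hL hσ2 hC1 hLip hhyp hgproper hgbot hγ0 hγL s u v hu
    hv
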